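/- arXiv:2509.00805 — 3 statements merged into one kernel-verified Lean document; each statement's English description precedes it below -/
import Mathlib

section
/- Suppose ψ : ℝ³ → ℝ³ → ℝ is such that for every unit vector Ω the map x ↦ ψ(x,Ω) is differentiable on ℝ³ and ψ satisfies ⟨Ω, ∇ₓψ(x,Ω)⟩ + σ_t(x) ψ(x,Ω) = S(x) for all x ∈ ℝ³ and all unit vectors Ω ∈ S². Assume moreover σ_t(x) > 0 for all x, and that for every unit vector Ω the map x ↦ σ_t(x)⁻¹⟨Ω, ∇ₓψ⁺(x,Ω)⟩ is differentiable on ℝ³. Then for all x and all unit vectors Ω: (i) the odd parity is determined by the even parity, ψ⁻(x,Ω) = −σ_t(x)⁻¹⟨Ω, ∇ₓψ⁺(x,Ω)⟩; and (ii) the even parity solves the second-order equation −⟨Ω, ∇ₓ( y ↦ σ_t(y)⁻¹⟨Ω, ∇ₓψ⁺(y,Ω)⟩ )(x)⟩ + σ_t(x) ψ⁺(x,Ω) = S(x). -/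
/-!
Adding and subtracting the transport equations in the directions `Ω` and `-Ω` gives the
first-order system `⟪Ω, ∇ψ⁺⟫ + σ_t ψ⁻ = 0`, `⟪Ω, ∇ψ⁻⟫ + σ_t ψ⁺ = S`. Since `σ_t ≠ 0`, the first
equation expresses `ψ⁻` through `ψ⁺`, and substituting this into the second one gives the
second-order equation.
-/

open RealInnerProductSpace

section

variable {E : Type*} [NormedAddCommGroup E] [InnerProductSpace ℝ E] [CompleteSpace E]
  {f g : E → ℝ} {x : E}

theorem inner_gradient_eq_fderiv (f : E → ℝ) (x v : E) :
    ⟪v, gradient f x⟫ = fderiv ℝ f x v := by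
  simp [inner_gradient_right]

theorem inner_gradient_half_add (hf : DifferentiableAt ℝ f x) (hg : DifferentiableAt ℝ g x)
    (v : E) :
    ⟪v, gradient (fun y => (f y + g y) / 2) x⟫ = (⟪v, gradient f x⟫ + ⟪v, gradient g x⟫) / 2 := by
  simp only [inner_gradient_eq_fderiv, div_eq_mul_inv,
    ((hf.hasFDerivAt.fun_add hg.hasFDerivAt).mul_const (2 : ℝ)⁻¹).fderiv,
    smul_apply, add_apply, smul_eq_mul]
  ring

theorem inner_gradient_half_sub (hf : DifferentiableAt ℝ f x) (hg : DifferentiableAt ℝ g x)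
    (v : E) :
    ⟪v, gradient (fun y => (f y - g y) / 2) x⟫ = (⟪v, gradient f x⟫ - ⟪v, gradient g x⟫) / 2 := by
  simp only [inner_gradient_eq_fderiv, div_eq_mul_inv,
    ((hf.hasFDerivAt.fun_sub hg.hasFDerivAt).mul_const (2 : ℝ)⁻¹).fderiv,
    smul_apply, sub_apply, smul_eq_mul]
  ring

theorem inner_gradient_neg (f : E → ℝ) (x v : E) :
    ⟪v, gradient (fun y => -f y) x⟫ = -⟪v, gradient f x⟫ := by
  simp only [inner_gradient_eq_fderiv, fderiv_fun_neg]
  rfl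

theorem transport_parity_system {σ S : E → ℝ} {v : E} (hf : DifferentiableAt ℝ f x)
    (hg : DifferentiableAt ℝ g x) (hfv : ⟪v, gradient f x⟫ + σ x * f x = S x)
    (hgv : ⟪-v, gradient g x⟫ + σ x * g x = S x) :
    ⟪v, gradient (fun y => (f y + g y) / 2) x⟫ + σ x * ((f x - g x) / 2) = 0 ∧
      ⟪v, gradient (fun y => (f y - g y) / 2) x⟫ + σ x * ((f x + g x) / 2) = S x := by
  rw [inner_neg_left] at hgv
  rw [inner_gradient_half_add hf hg, inner_gradient_half_sub hf hg]
  constructor <;> linarith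

end

theorem second_order_even_parity_equation_general
    (ψ ψp ψm : EuclideanSpace ℝ (Fin 3) → EuclideanSpace ℝ (Fin 3) → ℝ)
    (σt S : EuclideanSpace ℝ (Fin 3) → ℝ)
    (hp : ∀ x Ω, ψp x Ω = (ψ x Ω + ψ x (-Ω)) / 2)
    (hm : ∀ x Ω, ψm x Ω = (ψ x Ω - ψ x (-Ω)) / 2)
    (hσ : ∀ x, 0 < σt x)
    (hdiff : ∀ Ω : EuclideanSpace ℝ (Fin 3), ‖Ω‖ = 1 →
      Differentiable ℝ (fun x => ψ x Ω))
    (heq : ∀ (x Ω : EuclideanSpace ℝ (Fin 3)), ‖Ω‖ = 1 →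
      ⟪Ω, gradient (fun y => ψ y Ω) x⟫ + σt x * ψ x Ω = S x) :
    ∀ (x Ω : EuclideanSpace ℝ (Fin 3)), ‖Ω‖ = 1 →
      (ψm x Ω = -((σt x)⁻¹ * ⟪Ω, gradient (fun y => ψp y Ω) x⟫)) ∧
      (-⟪Ω, gradient (fun y => (σt y)⁻¹ * ⟪Ω, gradient (fun z => ψp z Ω) y⟫) x⟫
          + σt x * ψp x Ω = S x) := by
  intro x Ω hΩ
  have hΩneg : ‖-Ω‖ = 1 := by rwa [norm_neg]
  have system y := transport_parity_system (hdiff Ω hΩ y) (hdiff (-Ω) hΩneg y)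
    (heq y Ω hΩ) (heq y (-Ω) hΩneg)
  have hψp : (fun y => ψp y Ω) = fun y => (ψ y Ω + ψ y (-Ω)) / 2 := funext (hp · Ω)
  have hψm : (fun y => ψm y Ω) = fun y => (ψ y Ω - ψ y (-Ω)) / 2 := funext (hm · Ω)
  have odd_eq y : ψm y Ω = -((σt y)⁻¹ * ⟪Ω, gradient (fun z => ψp z Ω) y⟫) := by
    have hσy := (hσ y).ne'
    rw [hψp, hm]
    field_simp
    linarith [(system y).1]
  refine ⟨odd_eq x, ?_⟩
  have hflux : (fun y => (σt y)⁻¹ * ⟪Ω, gradient (fun z => ψp z Ω) y⟫) = fun y => -ψm y Ω :=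
    funext fun y => by rw [odd_eq, neg_neg]
  rw [hflux, inner_gradient_neg, neg_neg, hψm, hp]
  exact (system x).2

/-- For a solution `ψ` of the first-order transport equation with `σ_t > 0`,
the odd parity is determined by the even parity,
`ψ⁻(x,Ω) = −σ_t(x)⁻¹ ⟨Ω, ∇ₓψ⁺(x,Ω)⟩`, and the even parity solves the
second-order equation
`−⟨Ω, ∇ₓ(σ_t⁻¹ ⟨Ω, ∇ₓψ⁺⟩)(x)⟩ + σ_t(x) ψ⁺(x,Ω) = S(x)`. -/
theorem second_order_even_parity_equation
    (ψ ψp ψm : EuclideanSpace ℝ (Fin 3) → EuclideanSpace ℝ (Fin 3) → ℝ)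
    (σt S : EuclideanSpace ℝ (Fin 3) → ℝ)
    (hp : ∀ x Ω, ψp x Ω = (ψ x Ω + ψ x (-Ω)) / 2)
    (hm : ∀ x Ω, ψm x Ω = (ψ x Ω - ψ x (-Ω)) / 2)
    (hσ : ∀ x, 0 < σt x)
    (hdiff : ∀ Ω : EuclideanSpace ℝ (Fin 3), ‖Ω‖ = 1 →
      Differentiable ℝ (fun x => ψ x Ω))
    (heq : ∀ (x Ω : EuclideanSpace ℝ (Fin 3)), ‖Ω‖ = 1 →
      ⟪Ω, gradient (fun y => ψ y Ω) x⟫ + σt x * ψ x Ω = S x)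
    (hdiff2 : ∀ Ω : EuclideanSpace ℝ (Fin 3), ‖Ω‖ = 1 →
      Differentiable ℝ (fun x => (σt x)⁻¹ * ⟪Ω, gradient (fun y => ψp y Ω) x⟫)) :
    ∀ (x Ω : EuclideanSpace ℝ (Fin 3)), ‖Ω‖ = 1 →
      (ψm x Ω = -((σt x)⁻¹ * ⟪Ω, gradient (fun y => ψp y Ω) x⟫)) ∧
      (-⟪Ω, gradient (fun y => (σt y)⁻¹ * ⟪Ω, gradient (fun z => ψp z Ω) y⟫) x⟫
          + σt x * ψp x Ω = S x) :=
  second_order_even_parity_equation_general ψ ψp ψm σt S hp hm hσ hdiff heq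
end

section
/- Conversely, let σ_t, S : ℝ³ → ℝ with σ_t(x) > 0 for all x, let Ω ∈ ℝ³ be a unit vector, and let u : ℝ³ → ℝ be differentiable such that the map x ↦ σ_t(x)⁻¹⟨Ω, ∇u(x)⟩ is differentiable and u solves the second-order even-parity equation −⟨Ω, ∇( y ↦ σ_t(y)⁻¹⟨Ω, ∇u(y)⟩ )(x)⟩ + σ_t(x) u(x) = S(x) for all x ∈ ℝ³. Then the function ψ(x) := u(x) − σ_t(x)⁻¹⟨Ω, ∇u(x)⟩ solves the first-order transport equation ⟨Ω, ∇ψ(x)⟩ + σ_t(x) ψ(x) = S(x) for all x ∈ ℝ³. -/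
open RealInnerProductSpace

theorem gradient_fun_sub {F : Type*} [NormedAddCommGroup F] [InnerProductSpace ℝ F]
    [CompleteSpace F] {f g : F → ℝ} {x : F} (hf : DifferentiableAt ℝ f x)
    (hg : DifferentiableAt ℝ g x) :
    gradient (fun y => f y - g y) x = gradient f x - gradient g x := by
  simp only [gradient, fderiv_fun_sub hf hg, map_sub]

theorem second_order_to_first_order_general
    (σt S : EuclideanSpace ℝ (Fin 3) → ℝ)
    (hσ : ∀ x, 0 < σt x)
    (Ω : EuclideanSpace ℝ (Fin 3))
    (u : EuclideanSpace ℝ (Fin 3) → ℝ)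
    (hu : Differentiable ℝ u)
    (hg : Differentiable ℝ (fun x => (σt x)⁻¹ * ⟪Ω, gradient u x⟫))
    (heq : ∀ x, -⟪Ω, gradient (fun y => (σt y)⁻¹ * ⟪Ω, gradient u y⟫) x⟫
        + σt x * u x = S x) :
    ∀ x, ⟪Ω, gradient (fun y => u y - (σt y)⁻¹ * ⟪Ω, gradient u y⟫) x⟫
        + σt x * (u x - (σt x)⁻¹ * ⟪Ω, gradient u x⟫) = S x := by
  intro x
  have hσx : σt x ≠ 0 := (hσ x).ne'
  rw [gradient_fun_sub (hu x) (hg x), inner_sub_right, ← heq x, mul_sub,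
    mul_inv_cancel_left₀ hσx]
  ring

/-- Conversely, if `u` solves the second-order even-parity equation
`−⟨Ω, ∇(σ_t⁻¹ ⟨Ω, ∇u⟩)(x)⟩ + σ_t(x) u(x) = S(x)` with `σ_t > 0`, then
`ψ(x) = u(x) − σ_t(x)⁻¹ ⟨Ω, ∇u(x)⟩` solves the first-order transport equation
`⟨Ω, ∇ψ(x)⟩ + σ_t(x) ψ(x) = S(x)`. -/
theorem second_order_to_first_order
    (σt S : EuclideanSpace ℝ (Fin 3) → ℝ)
    (hσ : ∀ x, 0 < σt x)
    (Ω : EuclideanSpace ℝ (Fin 3)) (hΩ : ‖Ω‖ = 1)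
    (u : EuclideanSpace ℝ (Fin 3) → ℝ)
    (hu : Differentiable ℝ u)
    (hg : Differentiable ℝ (fun x => (σt x)⁻¹ * ⟪Ω, gradient u x⟫))
    (heq : ∀ x, -⟪Ω, gradient (fun y => (σt y)⁻¹ * ⟪Ω, gradient u y⟫) x⟫
        + σt x * u x = S x) :
    ∀ x, ⟪Ω, gradient (fun y => u y - (σt y)⁻¹ * ⟪Ω, gradient u y⟫) x⟫
        + σt x * (u x - (σt x)⁻¹ * ⟪Ω, gradient u x⟫) = S x :=
  second_order_to_first_order_general σt S hσ Ω u hu hg heq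
end

section
/- Let N ≥ 1, let P ∈ ℝ[X] be a polynomial of degree N of the form P = c·∏_{i=1}^{N}(X − xᵢ) with c ≠ 0 and real nodes x₁,…,x_N, and suppose P is orthogonal on [−1,1] to all lower-degree polynomials: ∫_{−1}^{1} P(t)·q(t) dt = 0 for every polynomial q of degree ≤ N − 1. Let w₁,…,w_N ∈ ℝ be weights such that Σ_{i=1}^{N} wᵢ q(xᵢ) = ∫_{−1}^{1} q(t) dt for every polynomial q of degree ≤ N − 1. Then the quadrature rule is exact on all polynomials of degree ≤ 2N − 1: Σ_{i=1}^{N} wᵢ q(xᵢ) = ∫_{−1}^{1} q(t) dt for every polynomial q with deg q ≤ 2N − 1. -/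
/-!
Divide `q` by the node polynomial: `q = P * s + r` with `deg r < N` and, since `deg q < 2N`,
also `deg s < N`. The quadrature does not see `P * s` because `P` vanishes at the nodes, and
the integral does not see it because `P` is orthogonal to `s`; on the remainder `r` the two agree
by assumption.
-/

open Polynomial

namespace Polynomial

variable {R K : Type*} [CommRing R] [Field K]

theorem natDegree_div (p : K[X]) {q : K[X]} (hq : q ≠ 0) :
    (p / q).natDegree = p.natDegree - q.natDegree := by
  rw [div_def, natDegree_C_mul (inv_ne_zero (leadingCoeff_ne_zero.mpr hq)),
    natDegree_divByMonic _ (monic_mul_leadingCoeff_inv hq), natDegree_mul_leadingCoeff_inv _ hq]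

theorem addMonoidHom_eq_of_natDegree_lt_two_mul {M : Type*} [AddCommMonoid M]
    (L₁ L₂ : K[X] →+ M) {P : K[X]}
    (hagree : ∀ r, r.degree < P.degree → L₁ r = L₂ r)
    (hL₁ : ∀ s, L₁ (P * s) = 0)
    (hL₂ : ∀ s, s.degree < P.degree → L₂ (P * s) = 0)
    {q : K[X]} (hq : q.natDegree < 2 * P.natDegree) : L₁ q = L₂ q := by
  have hP : P ≠ 0 := by
    rintro rfl
    simp at hq
  have hdiv : (q / P).degree < P.degree := by
    refine degree_lt_degree ?_
    rw [natDegree_div q hP]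
    omega
  rw [← EuclideanDomain.div_add_mod q P, map_add, map_add, hL₁, hL₂ _ hdiv,
    hagree _ (degree_mod_lt q hP)]

theorem eval_C_mul_prod_X_sub_C_eq_zero {ι : Type*} [Fintype ι] (c : R) (x : ι → R) (i : ι) :
    (C c * ∏ j, (X - C (x j))).eval (x i) = 0 :=
  dvd_iff_isRoot.mp <| (Finset.dvd_prod_of_mem _ (Finset.mem_univ i)).mul_left (C c)

theorem degree_C_mul_prod_X_sub_C [IsDomain R] {ι : Type*} [Fintype ι] {c : R} (hc : c ≠ 0)
    (x : ι → R) :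
    (C c * ∏ j, (X - C (x j))).degree = Fintype.card ι := by
  rw [degree_C_mul hc, degree_prod]
  simp

theorem degree_le_natCast_pred_of_degree_lt {p : R[X]} {n : ℕ}
    (hp : p.degree < n) : p.degree ≤ (n - 1 : ℕ) := by
  rcases eq_or_ne p 0 with rfl | hp0
  · simp
  · rw [degree_eq_natDegree hp0, Nat.cast_lt] at hp
    rw [degree_eq_natDegree hp0, Nat.cast_le]
    omega

def quadrature {ι : Type*} [Fintype ι] (x w : ι → R) : R[X] →+ R where
  toFun q := ∑ i, w i * q.eval (x i)
  map_zero' := by simp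
  map_add' p q := by simp [mul_add, Finset.sum_add_distrib]

theorem quadrature_mul_eq_zero_of_eval_eq_zero {ι : Type*} [Fintype ι] {x : ι → R} (w : ι → R)
    {P : R[X]} (hP : ∀ i, P.eval (x i) = 0) (s : R[X]) : quadrature x w (P * s) = 0 := by
  simp [quadrature, hP]

end Polynomial

noncomputable def intervalIntegralAddMonoidHom (a b : ℝ) : ℝ[X] →+ ℝ where
  toFun q := ∫ t in a..b, q.eval t
  map_zero' := by simp
  map_add' p q := by
    simpa using intervalIntegral.integral_add (p.continuous.intervalIntegrable a b)
      (q.continuous.intervalIntegrable a b)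

/-- Gauss quadrature exactness: if the node polynomial
`P = c·∏ᵢ (X − xᵢ)` (with `c ≠ 0`) of degree `N` is orthogonal on `[−1,1]` to
all polynomials of degree `≤ N − 1`, and the weights `wᵢ` reproduce the
integral of every polynomial of degree `≤ N − 1`, then the quadrature is exact
for every polynomial of degree `≤ 2N − 1`. -/
theorem gauss_quadrature_exactness (N : ℕ) (hN : 1 ≤ N)
    (c : ℝ) (hc : c ≠ 0) (x : Fin N → ℝ)
    (P : Polynomial ℝ)
    (hP : P = Polynomial.C c * ∏ i : Fin N, (Polynomial.X - Polynomial.C (x i)))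
    (horth : ∀ q : Polynomial ℝ, q.degree ≤ (N - 1 : ℕ) →
      ∫ t in (-1 : ℝ)..1, P.eval t * q.eval t = 0)
    (w : Fin N → ℝ)
    (hw : ∀ q : Polynomial ℝ, q.degree ≤ (N - 1 : ℕ) →
      ∑ i : Fin N, w i * q.eval (x i) = ∫ t in (-1 : ℝ)..1, q.eval t) :
    ∀ q : Polynomial ℝ, q.degree ≤ (2 * N - 1 : ℕ) →
      ∑ i : Fin N, w i * q.eval (x i) = ∫ t in (-1 : ℝ)..1, q.eval t := by
  intro q hq
  have hPdeg : P.degree = N := by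
    rw [hP, degree_C_mul_prod_X_sub_C hc, Fintype.card_fin]
  refine addMonoidHom_eq_of_natDegree_lt_two_mul (quadrature x w)
    (intervalIntegralAddMonoidHom (-1) 1) (P := P) ?_ ?_ ?_ ?_
  · intro r hr
    exact hw r (degree_le_natCast_pred_of_degree_lt (hPdeg ▸ hr))
  · exact quadrature_mul_eq_zero_of_eval_eq_zero w fun i =>
      hP ▸ eval_C_mul_prod_X_sub_C_eq_zero c x i
  · intro s hs
    simpa [intervalIntegralAddMonoidHom] using
      horth s (degree_le_natCast_pred_of_degree_lt (hPdeg ▸ hs))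
  · rw [natDegree_eq_of_degree_eq_some hPdeg]
    have := natDegree_le_of_degree_le hq
    omega
end
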